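/- Let C_f ∈ K(n, m, β_2, …, β_g) be a plane branch with finite Zariski invariant λ_f, such that I(f, x) = n and I(f, y) = m; set e_1 = gcd(n,m), n_1 = n/e_1, m_1 = m/e_1, and let C_h ∈ B ⊂ K(n_1, m_1) be defined by a monic polynomial h ∈ ℂ{x}[y] of degree n_1 with I(C_f, C_h) = (n_1 − 1)m + λ_f. Then: (a) I(h, x) = n_1 and I(h, y) = m_1; (b) in the h-adic expansion f = h^{e_1} + Σ_{k=0}^{e_1−1} A_k h^k with A_k ∈ ℂ{x}[y], deg_y(A_k) < n_1, one has I(f, h) = I(A_0, h) = (n_1 − 1)m + λ_f; and (c) there exist p, q ∈ ℕ with 0 ≤ q < n_1 such that p·n_1 + q·m_1 = (n_1 − 1)m + λ_f. -/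

import Mathlib

open scoped Classical

noncomputable section

/-- A plane branch `C_f`, encoded by a primitive Puiseux parametrization
`(t^n, Σ_{i>n} (a i) t^i)` which is transversal to `{x = 0}`. -/
structure Branch where
  /-- the multiplicity `n = mult(C_f)` -/
  n : ℕ
  npos : 0 < n
  /-- the coefficients of the Puiseux parametrization -/
  a : ℕ → ℂ
  /-- transversality of `{x = 0}`: the `y`-component has order `> n` -/
  lowZero : ∀ i ≤ n, a i = 0
  /-- the parametrization is primitive -/
  primitive : ∀ d : ℕ, d ∣ n → (∀ i, a i ≠ 0 → d ∣ i) → d = 1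

namespace Branch

/-- The `x`-component `t^n` of the parametrization. -/
def paramX (F : Branch) : PowerSeries ℂ := PowerSeries.X ^ F.n

/-- The `y`-component `Σ_{i>n} (a i) t^i` of the parametrization. -/
def paramY (F : Branch) : PowerSeries ℂ := PowerSeries.mk F.a

/-- The pair `(β_j, e_j)` of the characteristic sequence and the gcd sequence:
`β_0 = e_0 = n`, `β_{j+1} = min { i | a i ≠ 0 ∧ e_j ∤ i }`, `e_{j+1} = gcd (e_j, β_{j+1})`. -/
def charData (F : Branch) : ℕ → ℕ × ℕ
  | 0 => (F.n, F.n)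
  | j + 1 =>
      let b := sInf {i | F.a i ≠ 0 ∧ ¬ (F.charData j).2 ∣ i}
      (b, Nat.gcd (F.charData j).2 b)

/-- The characteristic sequence `β_j`; `β_0 = n`, `β_1 = m`. -/
def beta (F : Branch) (j : ℕ) : ℕ := (F.charData j).1

/-- The gcd sequence `e_j = gcd(β_0, …, β_j)`. -/
def e (F : Branch) (j : ℕ) : ℕ := (F.charData j).2

/-- The genus `g`: the first index with `e_g = 1`. -/
def genus (F : Branch) : ℕ := sInf {g | F.e g = 1}

/-- The minimal system of generators `v_0 < v_1 < ⋯ < v_g` of the value semigroup: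
`v_0 = n`, `v_1 = β_1`, `v_j = (e_{j-2}/e_{j-1}) v_{j-1} + β_j - β_{j-1}`. -/
def v (F : Branch) : ℕ → ℕ
  | 0 => F.n
  | 1 => F.beta 1
  | j + 2 => F.e j / F.e (j + 1) * F.v (j + 1) + F.beta (j + 2) - F.beta (j + 1)

/-- The coefficient at the rational exponent `q` of the Newton–Puiseux root indexed by `j`,
namely of `α_j(x) = Σ_i (a i) ε^{ij} x^{i/n}` with `ε = exp(2πI/n)`. -/
def rootCoeff (F : Branch) (j : ℕ) (q : ℚ) : ℂ :=
  if h : ∃ i : ℕ, (i : ℚ) = q * F.n then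
    F.a h.choose * Complex.exp (2 * Real.pi * Complex.I * j * h.choose / F.n)
  else 0

/-- The order `mult(α_j - δ_l)` of the difference of the `j`-th Newton–Puiseux root of `F`
and the `l`-th root of `G` (a rational number, `⊤` if the roots coincide). -/
def rootDiffOrder (F G : Branch) (j l : ℕ) : WithTop ℚ :=
  if h : ∃ k : ℕ, F.rootCoeff j ((k : ℚ) / (F.n * G.n)) ≠ G.rootCoeff l ((k : ℚ) / (F.n * G.n))
  then (((Nat.find h : ℚ) / (F.n * G.n) : ℚ) : WithTop ℚ)
  else ⊤

/-- The contact order `cont(C_F, C_G) = max_{j,l} mult(α_j - δ_l)` of two branches. -/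
def contact (F G : Branch) : WithTop ℚ :=
  haveI : Nonempty (Fin F.n × Fin G.n) := ⟨⟨0, F.npos⟩, ⟨0, G.npos⟩⟩
  Finset.sup' Finset.univ Finset.univ_nonempty fun p : Fin F.n × Fin G.n =>
    F.rootDiffOrder G p.1 p.2

/-- The intersection multiplicity `I(C_F, C_G) = dim_ℂ ℂ{x,y}/⟨f,g⟩`, computed as
`Σ_{j,l} mult(α_j - δ_l)` over all pairs of Newton–Puiseux roots. -/
def inter (F G : Branch) : WithTop ℚ :=
  ∑ p : Fin F.n × Fin G.n, F.rootDiffOrder G p.1 p.2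

/-- Pullback of a plane curve (here, with polynomial equation `h`) under the
parametrization of `F`: `h(t^n, Σ a_i t^i)`. -/
def pullbackPoly (F : Branch) (h : MvPolynomial (Fin 2) ℂ) : PowerSeries ℂ :=
  MvPolynomial.aeval ![F.paramX, F.paramY] h

/-- The value semigroup `Γ_F = { I(f,h) | f ∤ h }`, realized as the set of `t`-orders of the
nonzero pullbacks `h(t^n, Σ a_i t^i)`. -/
def gamma (F : Branch) : Set ℕ :=
  {d | ∃ h : MvPolynomial (Fin 2) ℂ, F.pullbackPoly h ≠ 0 ∧ (F.pullbackPoly h).order = (d : ℕ∞)}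

end Branch

/-- Substitution `φ(ρ(t))` of a power series `ρ` (with `ρ(0) = 0`) into a one-variable power
series `φ`. -/
def substt (ρ φ : PowerSeries ℂ) : PowerSeries ℂ :=
  PowerSeries.mk fun k =>
    ∑ i ∈ Finset.range (k + 1), PowerSeries.coeff (R := ℂ) i φ * PowerSeries.coeff (R := ℂ) k (ρ ^ i)

/-- Substitution `σ(u(t), v(t))` of two one-variable power series `u, v` (with
`u(0) = v(0) = 0`) into a two-variable power series `σ`. -/
def subst2 (u v : PowerSeries ℂ) (σ : MvPowerSeries (Fin 2) ℂ) : PowerSeries ℂ :=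
  PowerSeries.mk fun k =>
    ∑ p ∈ Finset.range (k + 1) ×ˢ Finset.range (k + 1),
      MvPowerSeries.coeff (R := ℂ) (Finsupp.single 0 p.1 + Finsupp.single 1 p.2) σ *
        PowerSeries.coeff (R := ℂ) k (u ^ p.1 * v ^ p.2)

namespace Branch

/-- Analytic equivalence of plane branches: there are a (formal) change of coordinates
`σ = (σ₁, σ₂)` of `(ℂ², 0)` (zero constant terms, invertible Jacobian at `0`) and a change of
parameter `ρ` (with `ord ρ = 1`) such that `σ ∘ φ_F ∘ ρ = φ_G`. -/
def AEquiv (F G : Branch) : Prop :=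
  ∃ σ₁ σ₂ : MvPowerSeries (Fin 2) ℂ, ∃ ρ : PowerSeries ℂ,
    MvPowerSeries.constantCoeff (σ := Fin 2) (R := ℂ) σ₁ = 0 ∧
    MvPowerSeries.constantCoeff (σ := Fin 2) (R := ℂ) σ₂ = 0 ∧
    MvPowerSeries.coeff (R := ℂ) (Finsupp.single 0 1) σ₁ *
        MvPowerSeries.coeff (R := ℂ) (Finsupp.single 1 1) σ₂ -
      MvPowerSeries.coeff (R := ℂ) (Finsupp.single 1 1) σ₁ *
        MvPowerSeries.coeff (R := ℂ) (Finsupp.single 0 1) σ₂ ≠ 0 ∧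
    PowerSeries.constantCoeff (R := ℂ) ρ = 0 ∧ PowerSeries.coeff (R := ℂ) 1 ρ ≠ 0 ∧
    subst2 (substt ρ F.paramX) (substt ρ F.paramY) σ₁ = G.paramX ∧
    subst2 (substt ρ F.paramX) (substt ρ F.paramY) σ₂ = G.paramY

/-- `F` is the branch `y^n - x^m = 0`, i.e. has Puiseux parametrization `(t^n, t^m)`. -/
def IsMonomial (F : Branch) (n m : ℕ) : Prop :=
  F.n = n ∧ ∀ i, F.a i = if i = m then 1 else 0

/-- `F` belongs to the family `B ⊆ K(n₁, m₁)` of plane branches analytically equivalent to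
`y^{n₁} - x^{m₁} = 0`. -/
def InFamilyB (n₁ m₁ : ℕ) (F : Branch) : Prop :=
  ∃ M : Branch, M.IsMonomial n₁ m₁ ∧ F.AEquiv M

/-- `lam` is the (finite) Zariski invariant `λ_F` of `F`: the branch `F` is analytically
equivalent to a branch with Puiseux parametrization
`(t^n, t^m + b t^lam + Σ_{i>lam} b_i t^i)` with `b ≠ 0` and `lam + n ∉ Γ_F`,
where `m = β_1`. -/
def HasZariskiInvariant (F : Branch) (lam : ℕ) : Prop :=
  ∃ G : Branch, F.AEquiv G ∧ G.n = F.n ∧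
    (∀ i < F.beta 1, G.a i = 0) ∧ G.a (F.beta 1) = 1 ∧
    (∀ i, F.beta 1 < i → i < lam → G.a i = 0) ∧
    G.a lam ≠ 0 ∧ lam + F.n ∉ F.gamma

end Branch

/-- The pullback `Σ_j c_j(t^n) y(t)^j` of a curve `f = Σ_j c_j(x) y^j ∈ ℂ{x}[y]` under a
parametrization `(t^n, y(t))`. -/
def pullbackWeierstrass (n : ℕ) (y : PowerSeries ℂ) (f : Polynomial (PowerSeries ℂ)) :
    PowerSeries ℂ :=
  ∑ j ∈ Finset.range (f.natDegree + 1), substt (PowerSeries.X ^ n) (f.coeff j) * y ^ j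

/-- `f ∈ ℂ{x}[y]` is a Weierstrass polynomial of degree `n`. -/
def IsWeierstrass (f : Polynomial (PowerSeries ℂ)) (n : ℕ) : Prop :=
  f.Monic ∧ f.natDegree = n ∧ ∀ j < n, PowerSeries.constantCoeff (R := ℂ) (f.coeff j) = 0

end
/-!
Write the Newton–Puiseux roots `α_j` of `C_F` and `δ_l` of `C_H` as power series in the common
variable `s = x^{1/(nN)}` (`n`, `N` the multiplicities). The substitution `s ↦ ζ s`, `ζ` a
primitive `nN`-th root of unity, sends `α_j` to `α_{j+1}` and `δ_l` to `δ_{l+1}`, so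
`I(C_F, C_H) = Σ_{j,l} ord(α_j - δ_l) / (nN) = (1/n) Σ_j ord(α_j - δ_0)`. Since
`f(s^{nN}, y) = ∏_j (y - α_j)`, evaluating at `y = δ_0` shows that this is also the order of
`f(t^N, y_H(t))`, which does not change when `f` is replaced by `A_0`, as `h` vanishes on `C_H`.
If `n · ord(y_H) ≠ N · m`, every `ord(α_j - δ_0)` is at most `N m < I(C_F, C_H)`; this forces
`ord(y_H) = m₁`, while `N = n₁` because the multiplicity is an analytic invariant. Finally every
`c ≥ (n₁ - 1) m₁` is `p n₁ + q m₁` with `q ≡ c m₁⁻¹ (mod n₁)`.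
-/

open PowerSeries
open scoped Polynomial

theorem Finset.sum_range_comp_succ_of_eq {M : Type*} [AddCommMonoid M] {f : ℕ → M} {n : ℕ}
    (h : f n = f 0) : ∑ i ∈ range n, f (i + 1) = ∑ i ∈ range n, f i := by
  cases n with
  | zero => simp
  | succ n => rw [sum_range_succ, h, sum_range_succ']

theorem ENat.eq_of_nsmul_eq_nsmul {n : ℕ} (hn : n ≠ 0) {a b : ℕ∞} (h : n • a = n • b) : a = b := by
  simp only [nsmul_eq_mul] at h
  exact (ENat.mul_right_strictMono (by exact_mod_cast hn) (ENat.natCast_ne_top n)).injective h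

theorem Nat.exists_mul_add_mul_eq_of_coprime {a b c : ℕ} (hab : Nat.Coprime a b) (ha : 0 < a)
    (hc : (a - 1) * b ≤ c) : ∃ p q : ℕ, q < a ∧ p * a + q * b = c := by
  have : NeZero a := ⟨ha.ne'⟩
  set q : ℕ := ((c : ZMod a) * (b : ZMod a)⁻¹).val
  have hqb : ((q * b : ℕ) : ZMod a) = c := by
    rw [Nat.cast_mul, ZMod.natCast_val, ZMod.cast_id, mul_assoc,
      ZMod.inv_mul_of_unit _ ((ZMod.isUnit_iff_coprime b a).mpr hab.symm), mul_one]
  have hle : q * b ≤ c := (Nat.mul_le_mul_right b (Nat.le_sub_one_of_lt (ZMod.val_lt _))).trans hc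
  obtain ⟨p, hp⟩ := (Nat.modEq_iff_dvd' hle).mp ((ZMod.natCast_eq_natCast_iff _ _ _).mp hqb)
  exact ⟨p, q, ZMod.val_lt _, by rw [mul_comm p, ← hp, Nat.sub_add_cancel hle]⟩

theorem Polynomial.eq_prod_X_sub_C_of_injOn {R ι : Type*} [CommRing R] [IsDomain R] {p : R[X]}
    (hp : p.Monic) {s : Finset ι} {r : ι → R} (hdeg : p.natDegree = s.card)
    (hroot : ∀ i ∈ s, p.IsRoot (r i)) (hinj : Set.InjOn r s) :
    p = ∏ i ∈ s, (X - C (r i)) := by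
  have hnodup : (s.val.map r).Nodup := s.nodup.map_on fun i hi j hj => hinj hi hj
  have hprod : ∏ i ∈ s, (X - C (r i)) = ((s.val.map r).map fun a => X - C a).prod := by
    rw [Finset.prod_eq_multiset_prod, Multiset.map_map]; rfl
  refine eq_of_monic_of_dvd_of_natDegree_le (monic_prod_X_sub_C r s) hp ?_ ?_
  · rw [hprod, Multiset.prod_X_sub_C_dvd_iff_le_roots hp.ne_zero, Multiset.le_iff_subset hnodup]
    intro a ha
    obtain ⟨i, hi, rfl⟩ := Multiset.mem_map.mp ha
    exact (mem_roots hp.ne_zero).mpr (hroot i hi)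
  · rw [hprod, natDegree_multiset_prod_X_sub_C_eq_card, Multiset.card_map, hdeg, Finset.card_val]

theorem Polynomial.Monic.exists_adic_expansion {R : Type*} [CommRing R] {h : R[X]} (hh : h.Monic)
    {d : ℕ} (hdeg : h.natDegree = d) :
    ∀ (e : ℕ) {f : R[X]}, f.Monic → f.natDegree = e * d →
      ∃ A : ℕ → R[X], (∀ k, (A k).degree < d) ∧ f = h ^ e + ∑ k ∈ Finset.range e, A k * h ^ k
  | 0, f, hf, hfd => ⟨0, fun _ => by simp, by simp [hf.natDegree_eq_zero.mp (by simpa using hfd)]⟩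
  | e + 1, f, hf, hfd => by
    nontriviality R
    have hhf : h.degree ≤ f.degree :=
      calc h.degree ≤ d := hdeg ▸ degree_le_natDegree
        _ ≤ f.natDegree := by rw [hfd]; exact_mod_cast Nat.le_mul_of_pos_left d e.succ_pos
        _ = f.degree := (degree_eq_natDegree hf.ne_zero).symm
    have hq : (f /ₘ h).Monic := (leadingCoeff_divByMonic_of_monic hh hhf).trans hf
    obtain ⟨A, hAdeg, hA⟩ := hh.exists_adic_expansion hdeg e hq (by
      rw [natDegree_divByMonic f hh, hfd, hdeg, add_one_mul, Nat.add_sub_cancel])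
    refine ⟨fun k => Nat.casesOn k (f %ₘ h) A, fun k => ?_, ?_⟩
    · cases k with
      | zero => exact hdeg ▸ (degree_modByMonic_lt f hh).trans_le degree_le_natDegree
      | succ k => exact hAdeg k
    · conv_lhs => rw [← modByMonic_add_div f h, hA]
      simp only [Finset.sum_range_succ', Nat.rec_zero, pow_zero, mul_one, mul_add, Finset.mul_sum]
      rw [Finset.sum_congr rfl fun k _ => (by ring : h * (A k * h ^ k) = A k * h ^ (k + 1))]
      ring

theorem Polynomial.eval₂_adic_expansion {R S : Type*} [CommSemiring R] [CommSemiring S]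
    (φ : R →+* S) {y : S} {h : R[X]} (hh : h.eval₂ φ y = 0) {e : ℕ} (he : e ≠ 0)
    (A : ℕ → R[X]) :
    (h ^ e + ∑ k ∈ Finset.range e, A k * h ^ k).eval₂ φ y = (A 0).eval₂ φ y := by
  obtain ⟨e, rfl⟩ := Nat.exists_eq_succ_of_ne_zero he
  simp [eval₂_finsetSum, Finset.sum_range_succ', eval₂_pow, hh]

namespace PowerSeries

theorem rescale_expand {R : Type*} [CommRing R] (p : ℕ) (hp : p ≠ 0) (a : R) (φ : R⟦X⟧) :
    rescale a (expand p hp φ) = expand p hp (rescale (a ^ p) φ) := by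
  ext k
  rw [coeff_rescale, coeff_expand, coeff_expand]
  split_ifs with h
  · obtain ⟨i, rfl⟩ := h
    rw [coeff_rescale, Nat.mul_div_cancel_left _ (Nat.pos_of_ne_zero hp), pow_mul]
  · rw [mul_zero]

theorem order_rescale {R : Type*} [CommSemiring R] [NoZeroDivisors R] {a : R} (ha : a ≠ 0)
    (φ : R⟦X⟧) : (rescale a φ).order = φ.order := by
  refine le_antisymm (le_order _ _ fun i hi => ?_) (le_order _ _ fun i hi => ?_)
  · have := coeff_of_lt_order i hi
    rw [coeff_rescale] at this
    exact (mul_eq_zero.mp this).resolve_left (pow_ne_zero i ha)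
  · rw [coeff_rescale, coeff_of_lt_order i hi, mul_zero]

theorem expand_comp_expand {R : Type*} [CommRing R] (p q : ℕ) (hp : p ≠ 0) (hq : q ≠ 0) :
    (expand p hp).toRingHom.comp (expand q hq).toRingHom =
      (expand (q * p) (q.mul_ne_zero hq hp) : R⟦X⟧ →ₐ[R] R⟦X⟧).toRingHom := by
  ext1 φ
  simp [mul_comm q p, ← expand_mul]

end PowerSeries

theorem substt_eq_subst {ρ : ℂ⟦X⟧} (hρ : constantCoeff ρ = 0) (φ : ℂ⟦X⟧) :
    substt ρ φ = φ.subst ρ := by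
  ext k
  rw [coeff_subst' (HasSubst.of_constantCoeff_zero' hρ), substt, coeff_mk,
    finsum_eq_sum_of_support_subset (s := Finset.range (k + 1))]
  · simp only [smul_eq_mul]
  · intro d hd
    rw [Finset.coe_range, Set.mem_Iio, Nat.lt_succ_iff]
    by_contra! hkd
    refine hd ?_
    dsimp only
    rw [coeff_of_lt_order k ((ENat.natCast_lt_natCast.mpr hkd).trans_le ?_), smul_zero]
    simpa using le_order_pow_of_constantCoeff_eq_zero d hρ

theorem substt_X_pow_eq_expand {n : ℕ} (hn : n ≠ 0) (φ : ℂ⟦X⟧) :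
    substt (X ^ n) φ = expand n hn φ := by
  rw [substt_eq_subst (by simp [hn]), expand_apply]

theorem pullbackWeierstrass_eq_eval₂ {n : ℕ} (hn : n ≠ 0) (y : ℂ⟦X⟧) (f : ℂ⟦X⟧[X]) :
    pullbackWeierstrass n y f = f.eval₂ (expand n hn).toRingHom y := by
  simp_rw [pullbackWeierstrass, Polynomial.eval₂_eq_sum_range, substt_X_pow_eq_expand hn]
  rfl

theorem coeff_subst2_of_le {u v : ℂ⟦X⟧} {σ : MvPowerSeries (Fin 2) ℂ} {d k : ℕ}
    (hσ : MvPowerSeries.constantCoeff σ = 0) (hd : 0 < d) (hu : (d : ℕ∞) ≤ u.order)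
    (hv : ((d + 1 : ℕ) : ℕ∞) ≤ v.order) (hk : k ≤ d) :
    coeff k (subst2 u v σ) = MvPowerSeries.coeff (Finsupp.single 0 1) σ * coeff k u := by
  rw [subst2, coeff_mk, Finset.sum_eq_single (1, 0)]
  · simp
  · rintro ⟨a, b⟩ - hab
    by_cases h0 : a = 0 ∧ b = 0
    · obtain ⟨rfl, rfl⟩ := h0
      simp [hσ]
    have hlt : d < a * d + b * (d + 1) := by
      rcases Nat.eq_zero_or_pos b with rfl | hb
      · have : 2 ≤ a := by grind
        nlinarith
      · nlinarith
    have hord : ((a * d + b * (d + 1) : ℕ) : ℕ∞) ≤ (u ^ a * v ^ b).order := by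
      rw [order_mul, order_pow, order_pow, Nat.cast_add, Nat.cast_mul, Nat.cast_mul,
        ← nsmul_eq_mul, ← nsmul_eq_mul]
      exact add_le_add (nsmul_le_nsmul_right hu a) (nsmul_le_nsmul_right hv b)
    rw [coeff_of_lt_order k ((Nat.cast_lt.mpr (hk.trans_lt hlt)).trans_le hord), mul_zero]
  · intro h
    obtain rfl : k = 0 := by simpa using h
    simp [coeff_of_lt_order 0 ((Nat.cast_lt.mpr hd).trans_le hu)]

noncomputable def unityRoot (N : ℕ) : ℂ := Complex.exp (2 * Real.pi * Complex.I / N)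

theorem isPrimitiveRoot_unityRoot {N : ℕ} (hN : N ≠ 0) : IsPrimitiveRoot (unityRoot N) N :=
  Complex.isPrimitiveRoot_exp N hN

theorem unityRoot_ne_zero (N : ℕ) : unityRoot N ≠ 0 := Complex.exp_ne_zero _

theorem unityRoot_mul_pow (a : ℕ) {b : ℕ} (hb : b ≠ 0) : unityRoot (a * b) ^ b = unityRoot a := by
  rw [unityRoot, unityRoot, ← Complex.exp_nat_mul]
  congr 1
  push_cast
  field_simp

namespace Branch

theorem AEquiv.n_eq {F G : Branch} (h : F.AEquiv G) : F.n = G.n := by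
  obtain ⟨σ₁, σ₂, ρ, hσ₁, hσ₂, hjac, hρ0, hρ1, hX, hY⟩ := h
  have hρ : ρ.order = 1 :=
    order_eq_nat.mpr ⟨hρ1, fun i hi => by simpa [Nat.lt_one_iff.mp hi] using hρ0⟩
  have hu : (substt ρ F.paramX).order = F.n := by
    rw [substt_eq_subst hρ0, paramX, subst_pow (HasSubst.of_constantCoeff_zero' hρ0),
      subst_X (HasSubst.of_constantCoeff_zero' hρ0), order_pow, hρ, nsmul_one]
  have hv : ((F.n + 1 : ℕ) : ℕ∞) ≤ (substt ρ F.paramY).order := nat_le_order _ _ fun i hi => by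
    rw [substt, coeff_mk]
    exact Finset.sum_eq_zero fun j hj => by
      rw [paramY, coeff_mk, F.lowZero j (by simp at hj; omega), zero_mul]
  set u := substt ρ F.paramX
  set v := substt ρ F.paramY
  have huF : coeff F.n u ≠ 0 := by
    simpa [hu] using coeff_order (fun h0 => by simp [h0] at hu : u ≠ 0)
  -- Up to order `n_F`, only the linear term `x` of `σ` contributes to `σ ∘ φ_F ∘ ρ`; for
  -- `n_F < n_G` this kills the first column of the Jacobian.
  have key : ∀ σ : MvPowerSeries (Fin 2) ℂ, MvPowerSeries.constantCoeff σ = 0 → ∀ k ≤ F.n,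
      coeff k (subst2 u v σ) = MvPowerSeries.coeff (Finsupp.single 0 1) σ * coeff k u :=
    fun σ hσ k hk => coeff_subst2_of_le hσ F.npos hu.ge hv hk
  have hle : F.n ≤ G.n := by
    by_contra! hlt
    have h₁ := key σ₁ hσ₁ G.n hlt.le
    rw [hX, paramX, coeff_X_pow_self,
      coeff_of_lt_order G.n (by rw [hu]; exact_mod_cast hlt), mul_zero] at h₁
    exact one_ne_zero h₁
  by_contra hne
  have h₁ : MvPowerSeries.coeff (Finsupp.single 0 1) σ₁ = 0 := by
    have := key σ₁ hσ₁ F.n le_rfl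
    rw [hX, paramX, coeff_X_pow, if_neg hne] at this
    exact (mul_eq_zero.mp this.symm).resolve_right huF
  have h₂ : MvPowerSeries.coeff (Finsupp.single 0 1) σ₂ = 0 := by
    have := key σ₂ hσ₂ F.n le_rfl
    rw [hY, paramY, coeff_mk, G.lowZero _ hle] at this
    exact (mul_eq_zero.mp this.symm).resolve_right huF
  exact hjac (by rw [h₁, h₂]; ring)

theorem add_n_mem_gamma {F : Branch} {m : ℕ} (hm : F.paramY.order = m) : m + F.n ∈ F.gamma := by
  have hpb : F.pullbackPoly (MvPolynomial.X 0 * MvPolynomial.X 1) = F.paramY * F.paramX := by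
    simp [pullbackPoly, mul_comm]
  have hord : (F.paramY * F.paramX).order = (m + F.n : ℕ) := by
    rw [order_mul, hm, paramX, order_X_pow, Nat.cast_add]
  exact ⟨_, hpb ▸ fun h0 => ENat.top_ne_natCast _ (by rw [← hord, h0, order_zero]), hpb ▸ hord⟩

theorem HasZariskiInvariant.beta_one_lt {F : Branch} {lam : ℕ} (hz : F.HasZariskiInvariant lam)
    (hm : F.paramY.order = F.beta 1) : F.beta 1 < lam := by
  obtain ⟨G, -, -, hlow, -, -, hlam, hnot⟩ := hz
  rcases lt_trichotomy lam (F.beta 1) with h | rfl | h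
  · exact absurd (hlow lam h) hlam
  · exact absurd (add_n_mem_gamma hm) hnot
  · exact h

section PuiseuxRoots

variable (F G : Branch)

theorem eq_one_of_pow_eq_one {M : Type*} [Monoid M] {μ : M} (hn : μ ^ F.n = 1)
    (ha : ∀ i, F.a i ≠ 0 → μ ^ i = 1) : μ = 1 :=
  orderOf_eq_one_iff.mp (F.primitive _ (orderOf_dvd_of_pow_eq_one hn)
    fun i hi => orderOf_dvd_of_pow_eq_one (ha i hi))

/-- The `j`-th Newton–Puiseux root of `F`, as a power series in `s = x^{1/(n_F n_G)}`. -/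
noncomputable def puiseuxRoot (j : ℕ) : ℂ⟦X⟧ :=
  rescale (unityRoot (F.n * G.n) ^ j) (expand G.n G.npos.ne' F.paramY)

theorem coeff_puiseuxRoot_mul (j i : ℕ) :
    coeff (G.n * i) (F.puiseuxRoot G j) = unityRoot F.n ^ (j * i) * F.a i := by
  rw [puiseuxRoot, coeff_rescale, coeff_expand_mul, ← pow_mul, mul_left_comm, pow_mul,
    unityRoot_mul_pow _ G.npos.ne', paramY, coeff_mk]

theorem coeff_puiseuxRoot_of_not_dvd (j : ℕ) {k : ℕ} (hk : ¬ G.n ∣ k) :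
    coeff k (F.puiseuxRoot G j) = 0 := by
  rw [puiseuxRoot, coeff_rescale, coeff_expand_of_not_dvd _ _ _ hk, mul_zero]

theorem rootCoeff_eq_coeff_puiseuxRoot (j k : ℕ) :
    F.rootCoeff j ((k : ℚ) / (F.n * G.n)) = coeff k (F.puiseuxRoot G j) := by
  have hF : (F.n : ℚ) ≠ 0 := Nat.cast_ne_zero.mpr F.npos.ne'
  have hG : (G.n : ℚ) ≠ 0 := Nat.cast_ne_zero.mpr G.npos.ne'
  have hq : (k : ℚ) / (F.n * G.n) * F.n = k / G.n := by field_simp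
  rw [rootCoeff, hq]
  by_cases hk : G.n ∣ k
  · obtain ⟨i, rfl⟩ := hk
    have hex : ∃ i' : ℕ, (i' : ℚ) = ((G.n * i : ℕ) : ℚ) / G.n := ⟨i, by push_cast; field_simp⟩
    have hi : hex.choose = i := by
      have h := hex.choose_spec.trans (by rw [Nat.cast_mul, mul_div_cancel_left₀ _ hG])
      exact_mod_cast h
    rw [dif_pos hex, hi, coeff_puiseuxRoot_mul, mul_comm, unityRoot, ← Complex.exp_nat_mul]
    congr 2
    push_cast
    ring
  · rw [dif_neg, coeff_puiseuxRoot_of_not_dvd _ _ _ hk]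
    rintro ⟨i, hi⟩
    refine hk ⟨i, ?_⟩
    rw [eq_div_iff hG, mul_comm] at hi
    exact_mod_cast hi.symm

theorem puiseuxRoot_zero : F.puiseuxRoot G 0 = expand G.n G.npos.ne' F.paramY := by
  rw [puiseuxRoot, pow_zero, rescale_one, RingHom.id_apply]

theorem puiseuxRoot_succ (j : ℕ) :
    F.puiseuxRoot G (j + 1) = rescale (unityRoot (F.n * G.n)) (F.puiseuxRoot G j) := by
  rw [puiseuxRoot, puiseuxRoot, pow_succ, rescale_mul, RingHom.comp_apply]

theorem puiseuxRoot_add_n (j : ℕ) : F.puiseuxRoot G (j + F.n) = F.puiseuxRoot G j := by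
  rw [puiseuxRoot, puiseuxRoot, pow_add, mul_comm, rescale_mul, RingHom.comp_apply, rescale_expand,
    ← pow_mul, (isPrimitiveRoot_unityRoot (F.n.mul_ne_zero F.npos.ne' G.npos.ne')).pow_eq_one,
    rescale_one, RingHom.id_apply]

theorem order_puiseuxRoot (j : ℕ) : (F.puiseuxRoot G j).order = G.n • F.paramY.order := by
  rw [puiseuxRoot, order_rescale (pow_ne_zero _ (unityRoot_ne_zero _)), order_expand]

theorem puiseuxRoot_injOn : Set.InjOn (F.puiseuxRoot G) (Finset.range F.n) := by
  intro j hj j' hj' h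
  have hω := isPrimitiveRoot_unityRoot F.npos.ne'
  have hω0 := unityRoot_ne_zero F.n
  refine hω.pow_inj (by simpa using hj) (by simpa using hj')
    ((div_eq_one_iff_eq (pow_ne_zero _ hω0)).mp (F.eq_one_of_pow_eq_one ?_ fun i hi => ?_))
  · rw [div_pow, ← pow_mul, ← pow_mul, mul_comm j, mul_comm j', pow_mul, pow_mul, hω.pow_eq_one,
      one_pow, one_pow, div_one]
  · have hcoeff := congrArg (coeff (G.n * i)) h
    rw [coeff_puiseuxRoot_mul, coeff_puiseuxRoot_mul] at hcoeff
    rw [div_pow, ← pow_mul, ← pow_mul, mul_right_cancel₀ hi hcoeff, div_self (pow_ne_zero _ hω0)]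

theorem rootDiffOrder_eq (j l : ℕ) :
    F.rootDiffOrder G j l =
      (F.puiseuxRoot G j - G.puiseuxRoot F l).order.map fun k : ℕ => (k : ℚ) / (F.n * G.n) := by
  have hcoeff : ∀ k : ℕ, F.rootCoeff j ((k : ℚ) / (F.n * G.n)) ≠ G.rootCoeff l ((k : ℚ) / (F.n * G.n))
      ↔ coeff k (F.puiseuxRoot G j - G.puiseuxRoot F l) ≠ 0 := fun k => by
    rw [map_sub, sub_ne_zero, rootCoeff_eq_coeff_puiseuxRoot, mul_comm (F.n : ℚ),
      rootCoeff_eq_coeff_puiseuxRoot]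
  rw [rootDiffOrder]
  split_ifs with h
  · rw [order_eq_nat.mpr ⟨(hcoeff _).mp (Nat.find_spec h),
      fun i hi => not_not.mp ((hcoeff i).not.mp (Nat.find_min h hi))⟩]
    rfl
  · rw [show F.puiseuxRoot G j - G.puiseuxRoot F l = 0 from ext fun k =>
      by_contra fun hk => h ⟨k, (hcoeff k).mpr hk⟩, order_zero]
    rfl

theorem order_sub_puiseuxRoot_succ (j l : ℕ) :
    (F.puiseuxRoot G (j + 1) - G.puiseuxRoot F (l + 1)).order =
      (F.puiseuxRoot G j - G.puiseuxRoot F l).order := by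
  rw [puiseuxRoot_succ, puiseuxRoot_succ, mul_comm G.n, ← map_sub,
    order_rescale (unityRoot_ne_zero _)]

theorem sum_order_sub_puiseuxRoot (l : ℕ) :
    ∑ j ∈ Finset.range F.n, (F.puiseuxRoot G j - G.puiseuxRoot F l).order =
      ∑ j ∈ Finset.range F.n, (F.puiseuxRoot G j - G.puiseuxRoot F 0).order := by
  induction l with
  | zero => rfl
  | succ l ih =>
    have hper : F.puiseuxRoot G F.n = F.puiseuxRoot G 0 := by simpa using F.puiseuxRoot_add_n G 0
    rw [← ih, ← Finset.sum_range_comp_succ_of_eq (by rw [hper])]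
    simp_rw [order_sub_puiseuxRoot_succ]

theorem inter_eq_map_sum :
    F.inter G = (G.n • ∑ j ∈ Finset.range F.n, (F.puiseuxRoot G j - G.puiseuxRoot F 0).order).map
      fun k : ℕ => (k : ℚ) / (F.n * G.n) := by
  let g : ℕ →+ ℚ := (AddMonoidHom.mulRight ((F.n * G.n : ℚ)⁻¹)).comp (Nat.castAddMonoidHom ℚ)
  have hg : (fun k : ℕ => (k : ℚ) / (F.n * G.n)) = g := funext fun k => div_eq_mul_inv _ _
  simp_rw [inter, rootDiffOrder_eq, hg]
  change ∑ p : Fin F.n × Fin G.n, g.ENatMap _ = g.ENatMap _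
  rw [← map_sum, Fintype.sum_prod_type, Finset.sum_comm]
  congr 1
  dsimp only
  refine (Finset.sum_congr rfl fun (l : Fin G.n) _ => (Fin.sum_univ_eq_sum_range
    (fun j => (F.puiseuxRoot G j - G.puiseuxRoot F (l : ℕ)).order) F.n).trans
      (F.sum_order_sub_puiseuxRoot G (l : ℕ))).trans ?_
  rw [Finset.sum_const, Finset.card_univ, Fintype.card_fin]

theorem sum_order_sub_puiseuxRoot_of_inter_eq {c : ℕ} (hI : F.inter G = ((c : ℚ) : WithTop ℚ)) :
    ∑ j ∈ Finset.range F.n, (F.puiseuxRoot G j - G.puiseuxRoot F 0).order = (F.n * c : ℕ) := by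
  rw [inter_eq_map_sum] at hI
  generalize ∑ j ∈ Finset.range F.n, (F.puiseuxRoot G j - G.puiseuxRoot F 0).order = S at hI ⊢
  induction S using ENat.recTopCoe with
  | top => simp [nsmul_eq_mul, G.npos.ne'] at hI
  | coe s =>
    rw [show G.n • (s : ℕ∞) = ((G.n * s : ℕ) : ℕ∞) by simp [nsmul_eq_mul], ENat.map_natCast,
      WithTop.coe_inj, div_eq_iff (by simp [F.npos.ne', G.npos.ne'])] at hI
    have : G.n * s = G.n * (F.n * c) := by
      rw [← Nat.cast_inj (R := ℚ), hI]
      push_cast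
      ring
    rw [Nat.eq_of_mul_eq_mul_left G.npos this]

theorem isRoot_map_expand_puiseuxRoot {f : ℂ⟦X⟧[X]}
    (hdef : pullbackWeierstrass F.n F.paramY f = 0) (j : ℕ) :
    (f.map (expand (F.n * G.n) (F.n.mul_ne_zero F.npos.ne' G.npos.ne')).toRingHom).IsRoot
      (F.puiseuxRoot G j) := by
  let φ := (rescale (unityRoot (F.n * G.n) ^ j)).comp (expand G.n G.npos.ne').toRingHom
  have hφ : φ.comp (expand F.n F.npos.ne').toRingHom =
      (expand (F.n * G.n) (F.n.mul_ne_zero F.npos.ne' G.npos.ne')).toRingHom := by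
    rw [RingHom.comp_assoc, expand_comp_expand]
    ext1 ψ
    rw [RingHom.comp_apply, AlgHom.toRingHom_eq_coe, RingHom.coe_coe, rescale_expand, ← pow_mul,
      pow_mul', (isPrimitiveRoot_unityRoot (F.n.mul_ne_zero F.npos.ne' G.npos.ne')).pow_eq_one,
      one_pow, rescale_one, RingHom.id_apply]
  rw [Polynomial.IsRoot, Polynomial.eval_map, ← hφ, show F.puiseuxRoot G j = φ F.paramY from rfl,
    ← Polynomial.hom_eval₂, ← pullbackWeierstrass_eq_eval₂, hdef, map_zero]

theorem map_expand_eq_prod {f : ℂ⟦X⟧[X]} (hf : f.Monic) (hdeg : f.natDegree = F.n)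
    (hdef : pullbackWeierstrass F.n F.paramY f = 0) :
    f.map (expand (F.n * G.n) (F.n.mul_ne_zero F.npos.ne' G.npos.ne')).toRingHom =
      ∏ j ∈ Finset.range F.n, (Polynomial.X - Polynomial.C (F.puiseuxRoot G j)) :=
  Polynomial.eq_prod_X_sub_C_of_injOn (hf.map _) (by rw [hf.natDegree_map, hdeg, Finset.card_range])
    (fun j _ => F.isRoot_map_expand_puiseuxRoot G hdef j) (F.puiseuxRoot_injOn G)

theorem order_expand_pullbackWeierstrass {f : ℂ⟦X⟧[X]} (hf : f.Monic) (hdeg : f.natDegree = F.n)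
    (hdef : pullbackWeierstrass F.n F.paramY f = 0) :
    (expand F.n F.npos.ne' (pullbackWeierstrass G.n G.paramY f)).order =
      ∑ j ∈ Finset.range F.n, (F.puiseuxRoot G j - G.puiseuxRoot F 0).order := by
  have hprod : expand F.n F.npos.ne' (pullbackWeierstrass G.n G.paramY f) =
      ∏ j ∈ Finset.range F.n, (G.puiseuxRoot F 0 - F.puiseuxRoot G j) := by
    rw [pullbackWeierstrass_eq_eval₂ G.npos.ne']
    change (expand F.n F.npos.ne').toRingHom (Polynomial.eval₂ _ _ f) = _
    rw [Polynomial.hom_eval₂, expand_comp_expand,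
      show (expand F.n F.npos.ne').toRingHom G.paramY = G.puiseuxRoot F 0 from
        (G.puiseuxRoot_zero F).symm,
      ← Polynomial.eval_map]
    simp only [Nat.mul_comm G.n F.n]
    rw [map_expand_eq_prod F G hf hdeg hdef, Polynomial.eval_prod]
    simp
  rw [hprod, order_prod]
  exact Finset.sum_congr rfl fun j _ => by rw [← order_neg, neg_sub]

theorem order_pullbackWeierstrass_of_inter_eq {f : ℂ⟦X⟧[X]} (hf : f.Monic)
    (hdeg : f.natDegree = F.n) (hdef : pullbackWeierstrass F.n F.paramY f = 0) {c : ℕ}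
    (hI : F.inter G = ((c : ℚ) : WithTop ℚ)) :
    (pullbackWeierstrass G.n G.paramY f).order = c := by
  refine ENat.eq_of_nsmul_eq_nsmul F.npos.ne' ?_
  rw [← order_expand F.n F.npos.ne', order_expand_pullbackWeierstrass F G hf hdeg hdef,
    sum_order_sub_puiseuxRoot_of_inter_eq F G hI]
  simp [nsmul_eq_mul]

theorem nsmul_order_paramY_of_inter_eq {m c : ℕ} (hm : F.paramY.order = m)
    (hI : F.inter G = ((c : ℚ) : WithTop ℚ)) (hc : G.n * m < c) :
    F.n • G.paramY.order = (G.n * m : ℕ) := by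
  by_contra hne
  have hle : ∀ j, (F.puiseuxRoot G j - G.puiseuxRoot F 0).order ≤ (G.n * m : ℕ) := fun j => by
    have hord : (F.puiseuxRoot G j).order = (G.n * m : ℕ) := by
      rw [order_puiseuxRoot, hm]
      simp [nsmul_eq_mul]
    have hne' : (F.puiseuxRoot G j).order ≠ (-G.puiseuxRoot F 0).order := by
      rw [order_neg, hord, order_puiseuxRoot]
      exact fun h => hne h.symm
    rw [sub_eq_add_neg, order_add_of_order_ne _ _ hne', hord]
    exact min_le_left _ _
  have hsum : ((F.n * c : ℕ) : ℕ∞) ≤ ∑ j ∈ Finset.range F.n, ((G.n * m : ℕ) : ℕ∞) := by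
    rw [← F.sum_order_sub_puiseuxRoot_of_inter_eq G hI]
    exact Finset.sum_le_sum fun j _ => hle j
  rw [Finset.sum_const, Finset.card_range, nsmul_eq_mul, ← Nat.cast_mul, Nat.cast_le] at hsum
  exact absurd (Nat.le_of_mul_le_mul_left hsum F.npos) hc.not_ge

end PuiseuxRoots

end Branch

theorem h_adic_expansion_general (F : Branch) (lam e₁ n₁ m₁ : ℕ)
    (he₁ : e₁ = Nat.gcd F.n (F.beta 1)) (hn₁ : n₁ = F.n / e₁) (hm₁ : m₁ = F.beta 1 / e₁)
    (hz : F.HasZariskiInvariant lam)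
    (f : Polynomial (PowerSeries ℂ)) (hW : IsWeierstrass f F.n)
    (hdef : pullbackWeierstrass F.n F.paramY f = 0)
    (hIy : F.paramY.order = (F.beta 1 : ℕ∞))
    (H : Branch) (hB : Branch.InFamilyB n₁ m₁ H)
    (h : Polynomial (PowerSeries ℂ)) (hmonic : h.Monic) (hdeg : h.natDegree = n₁)
    (hhdef : pullbackWeierstrass n₁ H.paramY h = 0)
    (hI : F.inter H = ((((n₁ - 1) * F.beta 1 + lam : ℕ) : ℚ) : WithTop ℚ)) :
    (H.paramX.order = (n₁ : ℕ∞) ∧ H.paramY.order = (m₁ : ℕ∞)) ∧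
    (∃ A : ℕ → Polynomial (PowerSeries ℂ),
      (∀ k, (A k).degree < (n₁ : ℕ)) ∧
      f = h ^ e₁ + ∑ k ∈ Finset.range e₁, A k * h ^ k ∧
      (pullbackWeierstrass n₁ H.paramY (A 0)).order = (((n₁ - 1) * F.beta 1 + lam : ℕ) : ℕ∞)) ∧
    (∃ p q : ℕ, q < n₁ ∧ p * n₁ + q * m₁ = (n₁ - 1) * F.beta 1 + lam) := by
  obtain ⟨M, hM, hHM⟩ := hB
  have hHn : H.n = n₁ := hHM.n_eq.trans hM.1
  have hn₁0 : n₁ ≠ 0 := hHn ▸ H.npos.ne'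
  have he₁pos : 0 < e₁ := he₁ ▸ Nat.gcd_pos_of_pos_left _ F.npos
  have hFn : F.n = n₁ * e₁ := by rw [hn₁, Nat.div_mul_cancel (he₁ ▸ Nat.gcd_dvd_left _ _)]
  have hβ : F.beta 1 = m₁ * e₁ := by rw [hm₁, Nat.div_mul_cancel (he₁ ▸ Nat.gcd_dvd_right _ _)]
  have hV : H.n * F.beta 1 < (n₁ - 1) * F.beta 1 + lam := by
    have := hz.beta_one_lt hIy
    have : (n₁ - 1) * F.beta 1 + F.beta 1 = H.n * F.beta 1 := by
      rw [← add_one_mul, Nat.sub_one_add_one hn₁0, hHn]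
    omega
  obtain ⟨A, hAdeg, hA⟩ := hmonic.exists_adic_expansion hdeg e₁ hW.1 (by rw [hW.2.1, hFn, mul_comm])
  refine ⟨⟨by rw [Branch.paramX, order_X_pow, hHn], ?_⟩, ⟨A, hAdeg, hA, ?_⟩, ?_⟩
  · refine ENat.eq_of_nsmul_eq_nsmul F.npos.ne' ?_
    rw [F.nsmul_order_paramY_of_inter_eq H hIy hI hV, hHn, hβ, hFn, nsmul_eq_mul]
    push_cast
    ring
  · rw [← F.order_pullbackWeierstrass_of_inter_eq H hW.1 hW.2.1 hdef hI, hHn,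
      pullbackWeierstrass_eq_eval₂ hn₁0, pullbackWeierstrass_eq_eval₂ hn₁0, hA,
      Polynomial.eval₂_adic_expansion _ ((pullbackWeierstrass_eq_eval₂ hn₁0 _ _).symm.trans hhdef)
        he₁pos.ne']
  · refine Nat.exists_mul_add_mul_eq_of_coprime ?_ (Nat.pos_of_ne_zero hn₁0) ?_
    · rw [hn₁, hm₁, he₁]
      exact Nat.coprime_div_gcd_div_gcd (Nat.gcd_pos_of_pos_left _ F.npos)
    · exact (Nat.mul_le_mul_left _ (hm₁ ▸ Nat.div_le_self _ _)).trans (Nat.le_add_right _ _)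

/-- Let `C_F` be a plane branch with finite Zariski invariant `λ_F`, Weierstrass polynomial
`f` with `I(f, x) = n`, `I(f, y) = m`, and let `C_H ∈ B ⊆ K(n₁, m₁)` be defined by a monic
polynomial `h ∈ ℂ{x}[y]` of degree `n₁` with `I(C_F, C_H) = (n₁ - 1)m + λ_F`.  Then:
(a) `I(h, x) = n₁` and `I(h, y) = m₁`;
(b) in the `h`-adic expansion `f = h^{e₁} + Σ_{k=0}^{e₁-1} A_k h^k` (with `deg_y A_k < n₁`)
one has `I(f, h) = I(A₀, h) = (n₁ - 1)m + λ_F`;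
(c) there are `p, q ∈ ℕ` with `q < n₁` and `p n₁ + q m₁ = (n₁ - 1)m + λ_F`. -/
theorem h_adic_expansion (F : Branch) (lam e₁ n₁ m₁ : ℕ)
    (he₁ : e₁ = Nat.gcd F.n (F.beta 1)) (hn₁ : n₁ = F.n / e₁) (hm₁ : m₁ = F.beta 1 / e₁)
    (hz : F.HasZariskiInvariant lam)
    (f : Polynomial (PowerSeries ℂ)) (hW : IsWeierstrass f F.n)
    (hdef : pullbackWeierstrass F.n F.paramY f = 0)
    (hIx : F.paramX.order = (F.n : ℕ∞)) (hIy : F.paramY.order = (F.beta 1 : ℕ∞))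
    (H : Branch) (hB : Branch.InFamilyB n₁ m₁ H)
    (h : Polynomial (PowerSeries ℂ)) (hmonic : h.Monic) (hdeg : h.natDegree = n₁)
    (hhdef : pullbackWeierstrass n₁ H.paramY h = 0)
    (hI : F.inter H = ((((n₁ - 1) * F.beta 1 + lam : ℕ) : ℚ) : WithTop ℚ)) :
    (H.paramX.order = (n₁ : ℕ∞) ∧ H.paramY.order = (m₁ : ℕ∞)) ∧
    (∃ A : ℕ → Polynomial (PowerSeries ℂ),
      (∀ k, (A k).degree < (n₁ : ℕ)) ∧
      f = h ^ e₁ + ∑ k ∈ Finset.range e₁, A k * h ^ k ∧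
      (pullbackWeierstrass n₁ H.paramY (A 0)).order = (((n₁ - 1) * F.beta 1 + lam : ℕ) : ℕ∞)) ∧
    (∃ p q : ℕ, q < n₁ ∧ p * n₁ + q * m₁ = (n₁ - 1) * F.beta 1 + lam) :=
  h_adic_expansion_general F lam e₁ n₁ m₁ he₁ hn₁ hm₁ hz f hW hdef hIy H hB h hmonic hdeg hhdef hI
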